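/- arXiv:2506.23890 — 5 statements merged into one kernel-verified Lean document; each statement's English description precedes it below -/
import Mathlib

section
/- Let η ∈ ℝ, η ≠ 0, and let u : ℝ² → ℝ be a C² function of (x,t). Define the 1-forms ω_1 = (1/η) sin u dt, ω_2 = η dx + (1/η) cos u dt, ω_3 = u_x dx. Then at every point of ℝ²: dω_1 − ω_3∧ω_2 = 0, dω_2 − ω_1∧ω_3 = 0, and dω_3 − ω_1∧ω_2 = −(u_{tx} − sin u) dx∧dt. Consequently, the structure equations dω_1 = ω_3∧ω_2, dω_2 = ω_1∧ω_3, dω_3 = ω_1∧ω_2 hold at every point if and only if u satisfies the sine-Gordon equation u_{tx} = sin u at every point. -/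
/-- Let `η ∈ ℝ`, `η ≠ 0`, and let `u : ℝ² → ℝ` be `C²` in `(x,t)`.  Define the 1-forms
`ω_1 = (1/η) sin u dt`, `ω_2 = η dx + (1/η) cos u dt`, `ω_3 = u_x dx`
(so `f_{11} = 0`, `f_{12} = (1/η) sin u`, `f_{21} = η`, `f_{22} = (1/η) cos u`,
`f_{31} = u_x`, `f_{32} = 0`).  With `d(f dx + g dt) = (∂_x g − ∂_t f) dx∧dt` and
`(f dx + g dt)∧(f' dx + g' dt) = (f g' − g f') dx∧dt` (identities of `dx∧dt`
coefficients), at every point of `ℝ²`: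
`dω_1 − ω_3∧ω_2 = 0`, `dω_2 − ω_1∧ω_3 = 0`, and
`dω_3 − ω_1∧ω_2 = −(u_{tx} − sin u) dx∧dt`.
Consequently the structure equations `dω_1 = ω_3∧ω_2`, `dω_2 = ω_1∧ω_3`,
`dω_3 = ω_1∧ω_2` hold at every point iff `u_{tx} = sin u` at every point. -/
theorem stmt_4 (η : ℝ) (hη : η ≠ 0) (u : ℝ × ℝ → ℝ) (hu : ContDiff ℝ 2 u)
    (ux : ℝ × ℝ → ℝ)
    (hux : ∀ p : ℝ × ℝ, ux p = deriv (fun x => u (x, p.2)) p.1) :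
    (∀ p : ℝ × ℝ,
        -- dω₁ − ω₃∧ω₂ = 0
        (deriv (fun x => (1 / η) * Real.sin (u (x, p.2))) p.1
            - deriv (fun _t : ℝ => (0 : ℝ)) p.2)
          - (ux p * ((1 / η) * Real.cos (u p)) - 0 * η) = 0
      ∧ -- dω₂ − ω₁∧ω₃ = 0
        (deriv (fun x => (1 / η) * Real.cos (u (x, p.2))) p.1
            - deriv (fun _t : ℝ => η) p.2)
          - ((0 : ℝ) * 0 - ((1 / η) * Real.sin (u p)) * ux p) = 0
      ∧ -- dω₃ − ω₁∧ω₂ = −(u_{tx} − sin u)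
        (deriv (fun _x : ℝ => (0 : ℝ)) p.1 - deriv (fun t => ux (p.1, t)) p.2)
          - ((0 : ℝ) * ((1 / η) * Real.cos (u p)) - ((1 / η) * Real.sin (u p)) * η)
          = -(deriv (fun t => ux (p.1, t)) p.2 - Real.sin (u p)))
    ∧ ((∀ p : ℝ × ℝ,
          (deriv (fun x => (1 / η) * Real.sin (u (x, p.2))) p.1
              - deriv (fun _t : ℝ => (0 : ℝ)) p.2
            = ux p * ((1 / η) * Real.cos (u p)) - 0 * η)
          ∧ (deriv (fun x => (1 / η) * Real.cos (u (x, p.2))) p.1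
              - deriv (fun _t : ℝ => η) p.2
            = (0 : ℝ) * 0 - ((1 / η) * Real.sin (u p)) * ux p)
          ∧ (deriv (fun _x : ℝ => (0 : ℝ)) p.1 - deriv (fun t => ux (p.1, t)) p.2
            = (0 : ℝ) * ((1 / η) * Real.cos (u p)) - ((1 / η) * Real.sin (u p)) * η))
        ↔ (∀ p : ℝ × ℝ, deriv (fun t => ux (p.1, t)) p.2 = Real.sin (u p))) := by
  have hud : Differentiable ℝ u := hu.differentiable (by norm_num)
  have key : ∀ p : ℝ × ℝ,
      deriv (fun x => (1 / η) * Real.sin (u (x, p.2))) p.1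
        = (1 / η) * (Real.cos (u p) * ux p) ∧
      deriv (fun x => (1 / η) * Real.cos (u (x, p.2))) p.1
        = (1 / η) * (-Real.sin (u p) * ux p) := by
    intro p
    have hg : HasDerivAt (fun x => u (x, p.2)) (ux p) p.1 := by
      rw [hux p]
      exact ((hud.comp ((differentiable_id.prodMk (differentiable_const p.2)))) p.1).hasDerivAt
    have hup : u (p.1, p.2) = u p := by rw [Prod.mk.eta]
    constructor
    · have := (((Real.hasDerivAt_sin (u (p.1, p.2))).comp p.1 hg).const_mul (1 / η)).deriv
      rw [hup] at this
      exact this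
    · have := (((Real.hasDerivAt_cos (u (p.1, p.2))).comp p.1 hg).const_mul (1 / η)).deriv
      rw [hup] at this
      exact this
  have hss : ∀ s : ℝ, (1 / η) * s * η = s := by
    intro s; field_simp
  constructor
  · intro p
    obtain ⟨h1, h2⟩ := key p
    refine ⟨?_, ?_, ?_⟩
    · rw [h1, deriv_const]; ring
    · rw [h2, deriv_const]; ring
    · simp only [deriv_const]
      have := hss (Real.sin (u p))
      ring_nf
      ring_nf at this
      linarith
  · constructor
    · intro h p
      have h3 := (h p).2.2
      simp only [deriv_const] at h3
      have := hss (Real.sin (u p))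
      nlinarith [h3]
    · intro h p
      obtain ⟨h1, h2⟩ := key p
      refine ⟨?_, ?_, ?_⟩
      · rw [h1, deriv_const]; ring
      · rw [h2, deriv_const]; ring
      · simp only [deriv_const]
        rw [h p]
        have := hss (Real.sin (u p))
        linarith
end

section
/- Let λ ∈ ℝ, λ ≠ 0, let u : ℝ² → ℝ be a C⁴ function of (x,t), and set m = u − u_{xx}. Define the 1-forms ω_1 = (λ/2 + 1/(2λ) − m) dx + (um + (λ/2)u − u/(2λ) − 1/2 − λ²/2) dt, ω_2 = −u_x dt, ω_3 = (m + 1/(2λ) − λ/2) dx + (λ²/2 − 1/2 − u/(2λ) − (λ/2)u − um) dt. Then at every point of ℝ²: dω_1 − ω_3∧ω_2 = (u_t − u_{txx} + 3uu_x − 2u_xu_{xx} − uu_{xxx}) dx∧dt, dω_2 − ω_1∧ω_3 = 0, and dω_3 − ω_1∧ω_2 = −(u_t − u_{txx} + 3uu_x − 2u_xu_{xx} − uu_{xxx}) dx∧dt. Consequently, the structure equations dω_1 = ω_3∧ω_2, dω_2 = ω_1∧ω_3, dω_3 = ω_1∧ω_2 hold at every point if and only if u satisfies the Camassa–Holm equation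 u_t − u_{txx} + 3uu_x = 2u_xu_{xx} + uu_{xxx} at every point. -/
/-!
A partial derivative of `u` is the derivative of a slice, i.e. the Fréchet derivative applied
to a coordinate vector, so `u_x` and `u_xx` are again differentiable and every slice derivative
in the statement exists. The coefficients of `ω₁` and `ω₃` depend on `(x, t)` only through `u`
and `m`, so their slice derivatives come from the product rule, and the three identities reduce
to polynomial identities in `λ`, `1/λ` and the derivatives of `u`.
-/

section SliceDerivatives

variable {f g : ℝ × ℝ → ℝ}

theorem hasDerivAt_slice_fst {p : ℝ × ℝ} (hf : DifferentiableAt ℝ f p) :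
    HasDerivAt (fun x => f (x, p.2)) (fderiv ℝ f p (1, 0)) p.1 :=
  hf.hasFDerivAt.comp_hasDerivAt p.1 ((hasDerivAt_id p.1).prodMk (hasDerivAt_const p.1 p.2))

theorem hasDerivAt_slice_snd {p : ℝ × ℝ} (hf : DifferentiableAt ℝ f p) :
    HasDerivAt (fun t => f (p.1, t)) (fderiv ℝ f p (0, 1)) p.2 :=
  hf.hasFDerivAt.comp_hasDerivAt p.2 ((hasDerivAt_const p.2 p.1).prodMk (hasDerivAt_id p.2))

theorem hasDerivAt_slice_fst_of_eq_deriv (hf : Differentiable ℝ f)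
    (hg : ∀ p : ℝ × ℝ, g p = deriv (fun x => f (x, p.2)) p.1) (p : ℝ × ℝ) :
    HasDerivAt (fun x => f (x, p.2)) (g p) p.1 := by
  rw [hg p]
  exact (hasDerivAt_slice_fst (hf p)).differentiableAt.hasDerivAt

theorem hasDerivAt_slice_snd_of_eq_deriv (hf : Differentiable ℝ f)
    (hg : ∀ p : ℝ × ℝ, g p = deriv (fun t => f (p.1, t)) p.2) (p : ℝ × ℝ) :
    HasDerivAt (fun t => f (p.1, t)) (g p) p.2 := by
  rw [hg p]
  exact (hasDerivAt_slice_snd (hf p)).differentiableAt.hasDerivAt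

theorem contDiff_of_eq_deriv_slice_fst {m n : WithTop ℕ∞} (hf : ContDiff ℝ m f)
    (hmn : n + 1 ≤ m) (hg : ∀ p : ℝ × ℝ, g p = deriv (fun x => f (x, p.2)) p.1) :
    ContDiff ℝ n g := by
  have hf' : Differentiable ℝ f := hf.differentiable (by rintro rfl; simp at hmn)
  have : g = fun p => fderiv ℝ f p (1, 0) :=
    funext fun p => (hg p).trans (hasDerivAt_slice_fst (hf' p)).deriv
  exact this ▸ (hf.fderiv_right hmn).clm_apply contDiff_const

theorem hasDerivAt_partials_of_contDiff {u ux uxx uxxx ut utxx : ℝ × ℝ → ℝ}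
    (hu : ContDiff ℝ 3 u)
    (hux : ∀ p : ℝ × ℝ, ux p = deriv (fun x => u (x, p.2)) p.1)
    (huxx : ∀ p : ℝ × ℝ, uxx p = deriv (fun x => ux (x, p.2)) p.1)
    (huxxx : ∀ p : ℝ × ℝ, uxxx p = deriv (fun x => uxx (x, p.2)) p.1)
    (hut : ∀ p : ℝ × ℝ, ut p = deriv (fun t => u (p.1, t)) p.2)
    (hutxx : ∀ p : ℝ × ℝ, utxx p = deriv (fun t => uxx (p.1, t)) p.2) (p : ℝ × ℝ) :
    HasDerivAt (fun x => u (x, p.2)) (ux p) p.1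
      ∧ HasDerivAt (fun x => ux (x, p.2)) (uxx p) p.1
      ∧ HasDerivAt (fun x => uxx (x, p.2)) (uxxx p) p.1
      ∧ HasDerivAt (fun t => u (p.1, t)) (ut p) p.2
      ∧ HasDerivAt (fun t => uxx (p.1, t)) (utxx p) p.2 := by
  have hux_C2 : ContDiff ℝ 2 ux := contDiff_of_eq_deriv_slice_fst hu (by norm_num) hux
  have huxx_C1 : ContDiff ℝ 1 uxx := contDiff_of_eq_deriv_slice_fst hux_C2 (by norm_num) huxx
  have hud : Differentiable ℝ u := hu.differentiable (by norm_num)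
  have huxxd : Differentiable ℝ uxx := huxx_C1.differentiable one_ne_zero
  exact ⟨hasDerivAt_slice_fst_of_eq_deriv hud hux p,
    hasDerivAt_slice_fst_of_eq_deriv (hux_C2.differentiable (by norm_num)) huxx p,
    hasDerivAt_slice_fst_of_eq_deriv huxxd huxxx p,
    hasDerivAt_slice_snd_of_eq_deriv hud hut p,
    hasDerivAt_slice_snd_of_eq_deriv huxxd hutxx p⟩

end SliceDerivatives

theorem hasDerivAt_formCoeffs_comp {lam : ℝ} {u mm f11 f12 f31 f32 : ℝ × ℝ → ℝ}
    (hf11 : ∀ p : ℝ × ℝ, f11 p = lam / 2 + 1 / (2 * lam) - mm p)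
    (hf12 : ∀ p : ℝ × ℝ, f12 p
      = u p * mm p + (lam / 2) * u p - u p / (2 * lam) - 1 / 2 - lam ^ 2 / 2)
    (hf31 : ∀ p : ℝ × ℝ, f31 p = mm p + 1 / (2 * lam) - lam / 2)
    (hf32 : ∀ p : ℝ × ℝ, f32 p
      = lam ^ 2 / 2 - 1 / 2 - u p / (2 * lam) - (lam / 2) * u p - u p * mm p)
    {γ : ℝ → ℝ × ℝ} {s a b : ℝ} (hu : HasDerivAt (fun s => u (γ s)) a s)
    (hm : HasDerivAt (fun s => mm (γ s)) b s) :
    HasDerivAt (fun s => f11 (γ s)) (-b) s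
      ∧ HasDerivAt (fun s => f12 (γ s))
          (a * mm (γ s) + u (γ s) * b + lam / 2 * a - a / (2 * lam)) s
      ∧ HasDerivAt (fun s => f31 (γ s)) b s
      ∧ HasDerivAt (fun s => f32 (γ s))
          (-(a / (2 * lam)) - lam / 2 * a - (a * mm (γ s) + u (γ s) * b)) s := by
  simp only [hf11, hf12, hf31, hf32]
  refine ⟨?_, ?_, ?_, ?_⟩
  · exact hm.const_sub _
  · exact ((((hu.mul hm).add (hu.const_mul _)).sub (hu.div_const _)).sub_const _).sub_const _
  · exact (hm.add_const _).sub_const _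
  · exact ((((hu.div_const _).const_sub _).sub (hu.const_mul _)).sub (hu.mul hm))

/-- Let `λ ∈ ℝ`, `λ ≠ 0`, `u : ℝ² → ℝ` a `C⁴` function of `(x,t)`, and `m = u − u_xx`.
Define the 1-forms
`ω_1 = (λ/2 + 1/(2λ) − m) dx + (um + (λ/2)u − u/(2λ) − 1/2 − λ²/2) dt`,
`ω_2 = −u_x dt`,
`ω_3 = (m + 1/(2λ) − λ/2) dx + (λ²/2 − 1/2 − u/(2λ) − (λ/2)u − um) dt`.
With `d(f dx + g dt) = (∂_x g − ∂_t f) dx∧dt` and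
`(f dx + g dt)∧(f' dx + g' dt) = (f g' − g f') dx∧dt`, at every point of `ℝ²`:
`dω_1 − ω_3∧ω_2 = (u_t − u_{txx} + 3uu_x − 2u_xu_{xx} − uu_{xxx}) dx∧dt`,
`dω_2 − ω_1∧ω_3 = 0`,
`dω_3 − ω_1∧ω_2 = −(u_t − u_{txx} + 3uu_x − 2u_xu_{xx} − uu_{xxx}) dx∧dt`.
Consequently the structure equations hold at every point iff `u` satisfies the
Camassa–Holm equation `u_t − u_{txx} + 3uu_x = 2u_xu_{xx} + uu_{xxx}` everywhere. -/
theorem stmt_6 (lam : ℝ) (hlam : lam ≠ 0) (u : ℝ × ℝ → ℝ) (hu : ContDiff ℝ 4 u)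
    (ux uxx uxxx ut utxx mm f11 f12 f31 f32 : ℝ × ℝ → ℝ)
    (hux : ∀ p : ℝ × ℝ, ux p = deriv (fun x => u (x, p.2)) p.1)
    (huxx : ∀ p : ℝ × ℝ, uxx p = deriv (fun x => ux (x, p.2)) p.1)
    (huxxx : ∀ p : ℝ × ℝ, uxxx p = deriv (fun x => uxx (x, p.2)) p.1)
    (hut : ∀ p : ℝ × ℝ, ut p = deriv (fun t => u (p.1, t)) p.2)
    (hutxx : ∀ p : ℝ × ℝ, utxx p = deriv (fun t => uxx (p.1, t)) p.2)
    (hmm : ∀ p : ℝ × ℝ, mm p = u p - uxx p)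
    (hf11 : ∀ p : ℝ × ℝ, f11 p = lam / 2 + 1 / (2 * lam) - mm p)
    (hf12 : ∀ p : ℝ × ℝ, f12 p
      = u p * mm p + (lam / 2) * u p - u p / (2 * lam) - 1 / 2 - lam ^ 2 / 2)
    (hf31 : ∀ p : ℝ × ℝ, f31 p = mm p + 1 / (2 * lam) - lam / 2)
    (hf32 : ∀ p : ℝ × ℝ, f32 p
      = lam ^ 2 / 2 - 1 / 2 - u p / (2 * lam) - (lam / 2) * u p - u p * mm p) :
    (∀ p : ℝ × ℝ,
        -- dω₁ − ω₃∧ω₂ = (CH expression) dx∧dt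
        (deriv (fun x => f12 (x, p.2)) p.1 - deriv (fun t => f11 (p.1, t)) p.2)
            - (f31 p * (-ux p) - f32 p * 0)
          = ut p - utxx p + 3 * u p * ux p - 2 * ux p * uxx p - u p * uxxx p
      ∧ -- dω₂ − ω₁∧ω₃ = 0
        (deriv (fun x => -ux (x, p.2)) p.1 - deriv (fun _t : ℝ => (0 : ℝ)) p.2)
            - (f11 p * f32 p - f12 p * f31 p) = 0
      ∧ -- dω₃ − ω₁∧ω₂ = −(CH expression) dx∧dt
        (deriv (fun x => f32 (x, p.2)) p.1 - deriv (fun t => f31 (p.1, t)) p.2)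
            - (f11 p * (-ux p) - f12 p * 0)
          = -(ut p - utxx p + 3 * u p * ux p - 2 * ux p * uxx p - u p * uxxx p))
    ∧ ((∀ p : ℝ × ℝ,
          (deriv (fun x => f12 (x, p.2)) p.1 - deriv (fun t => f11 (p.1, t)) p.2
              = f31 p * (-ux p) - f32 p * 0)
          ∧ (deriv (fun x => -ux (x, p.2)) p.1 - deriv (fun _t : ℝ => (0 : ℝ)) p.2
              = f11 p * f32 p - f12 p * f31 p)
          ∧ (deriv (fun x => f32 (x, p.2)) p.1 - deriv (fun t => f31 (p.1, t)) p.2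
              = f11 p * (-ux p) - f12 p * 0))
        ↔ (∀ p : ℝ × ℝ,
            ut p - utxx p + 3 * u p * ux p
              = 2 * ux p * uxx p + u p * uxxx p)) := by
  have key : ∀ p : ℝ × ℝ,
      (deriv (fun x => f12 (x, p.2)) p.1 - deriv (fun t => f11 (p.1, t)) p.2)
          - (f31 p * (-ux p) - f32 p * 0)
        = ut p - utxx p + 3 * u p * ux p - 2 * ux p * uxx p - u p * uxxx p
      ∧ (deriv (fun x => -ux (x, p.2)) p.1 - deriv (fun _t : ℝ => (0 : ℝ)) p.2)
          - (f11 p * f32 p - f12 p * f31 p) = 0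
      ∧ (deriv (fun x => f32 (x, p.2)) p.1 - deriv (fun t => f31 (p.1, t)) p.2)
          - (f11 p * (-ux p) - f12 p * 0)
        = -(ut p - utxx p + 3 * u p * ux p - 2 * ux p * uxx p - u p * uxxx p) := by
    intro p
    obtain ⟨hu_x, hux_x, huxx_x, hu_t, huxx_t⟩ :=
      hasDerivAt_partials_of_contDiff (hu.of_le (by norm_num)) hux huxx huxxx hut hutxx p
    have hm_x : HasDerivAt (fun x => mm (x, p.2)) (ux p - uxxx p) p.1 := by
      simp only [hmm]; exact hu_x.sub huxx_x
    have hm_t : HasDerivAt (fun t => mm (p.1, t)) (ut p - utxx p) p.2 := by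
      simp only [hmm]; exact hu_t.sub huxx_t
    obtain ⟨-, d12, -, d32⟩ := hasDerivAt_formCoeffs_comp hf11 hf12 hf31 hf32 hu_x hm_x
    obtain ⟨d11, -, d31, -⟩ := hasDerivAt_formCoeffs_comp hf11 hf12 hf31 hf32 hu_t hm_t
    have d2 : HasDerivAt (fun x => -ux (x, p.2)) (-uxx p) p.1 := hux_x.neg
    simp only [Prod.mk.eta] at d12 d32
    rw [d12.deriv, d11.deriv, d2.deriv, deriv_const, d32.deriv, d31.deriv,
      hf11 p, hf12 p, hf31 p, hf32 p, hmm p]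
    exact ⟨by ring, by field_simp; ring, by ring⟩
  refine ⟨key, fun h p => by linarith [(key p).1, (h p).1], fun h p => ?_⟩
  obtain ⟨k1, k2, k3⟩ := key p
  exact ⟨by linarith [h p], by linarith, by linarith [h p]⟩
end

section
/- Let f : ℝ → ℝ be C¹, not identically zero, with f(x) → 0 and f'(x) → 0 as x → +∞ and as x → −∞. Then f' attains a global minimum and a global maximum on ℝ: there exist a, b ∈ ℝ with f'(a) ≤ f'(x) ≤ f'(b) for all x ∈ ℝ, and moreover f'(a) < 0 < f'(b); in particular f'(a)·f'(b) < 0. -/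
/-!
A monotone (or antitone) function with the same limit at both ends is constant, so the
nonzero `f`, which tends to `0` at `±∞`, is neither monotone nor antitone; hence `f'` takes
both signs. Since `f'` is continuous and tends to `0` at `±∞`, outside some compact set it stays
above any of its negative values and below any of its positive ones, so its infimum and
supremum are attained.
-/

open Filter Topology

section MonotoneLimits

variable {α β : Type*} [TopologicalSpace α] [PartialOrder α] [OrderClosedTopology α]
  [Preorder β] [IsDirectedOrder β] [IsCodirectedOrder β] {f : β → α} {a : α}

theorem Monotone.eq_of_tendsto_atBot_atTop (hf : Monotone f) (hbot : Tendsto f atBot (𝓝 a))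
    (htop : Tendsto f atTop (𝓝 a)) (b : β) : f b = a :=
  le_antisymm (hf.ge_of_tendsto htop b) (hf.le_of_tendsto hbot b)

theorem Antitone.eq_of_tendsto_atBot_atTop (hf : Antitone f) (hbot : Tendsto f atBot (𝓝 a))
    (htop : Tendsto f atTop (𝓝 a)) (b : β) : f b = a :=
  le_antisymm (hf.ge_of_tendsto hbot b) (hf.le_of_tendsto htop b)

end MonotoneLimits

section DerivSign

variable {f : ℝ → ℝ} {a : ℝ}

theorem exists_deriv_neg_of_tendsto_atBot_atTop (hf : Differentiable ℝ f)
    (hbot : Tendsto f atBot (𝓝 a)) (htop : Tendsto f atTop (𝓝 a)) (hne : ∃ x, f x ≠ a) :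
    ∃ c, deriv f c < 0 := by
  by_contra! h
  obtain ⟨x, hx⟩ := hne
  exact hx ((monotone_of_deriv_nonneg hf h).eq_of_tendsto_atBot_atTop hbot htop x)

theorem exists_deriv_pos_of_tendsto_atBot_atTop (hf : Differentiable ℝ f)
    (hbot : Tendsto f atBot (𝓝 a)) (htop : Tendsto f atTop (𝓝 a)) (hne : ∃ x, f x ≠ a) :
    ∃ c, 0 < deriv f c := by
  by_contra! h
  obtain ⟨x, hx⟩ := hne
  exact hx ((antitone_of_deriv_nonpos hf h).eq_of_tendsto_atBot_atTop hbot htop x)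

end DerivSign

section AttainedExtrema

variable {α : Type*} [LinearOrder α] [TopologicalSpace α] [OrderTopology α] [NoMaxOrder α]
  [NoMinOrder α] [CompactIccSpace α] {g : α → ℝ} {L : ℝ} {c : α}

theorem tendsto_cocompact_of_tendsto_atBot_atTop (hbot : Tendsto g atBot (𝓝 L))
    (htop : Tendsto g atTop (𝓝 L)) : Tendsto g (cocompact α) (𝓝 L) := by
  rw [cocompact_eq_atBot_atTop]
  exact hbot.sup htop

theorem Continuous.exists_forall_le_lt_of_tendsto_atBot_atTop (hg : Continuous g)
    (hbot : Tendsto g atBot (𝓝 L)) (htop : Tendsto g atTop (𝓝 L)) (hc : g c < L) :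
    ∃ a, (∀ x, g a ≤ g x) ∧ g a < L := by
  have hfar : ∀ᶠ x in cocompact α, g c ≤ g x :=
    ((tendsto_cocompact_of_tendsto_atBot_atTop hbot htop).eventually (lt_mem_nhds hc)).mono
      fun _ hx => hx.le
  obtain ⟨a, ha⟩ := hg.exists_forall_le' c hfar
  exact ⟨a, ha, (ha c).trans_lt hc⟩

theorem Continuous.exists_forall_ge_gt_of_tendsto_atBot_atTop (hg : Continuous g)
    (hbot : Tendsto g atBot (𝓝 L)) (htop : Tendsto g atTop (𝓝 L)) (hc : L < g c) :
    ∃ b, (∀ x, g x ≤ g b) ∧ L < g b := by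
  have hfar : ∀ᶠ x in cocompact α, g x ≤ g c :=
    ((tendsto_cocompact_of_tendsto_atBot_atTop hbot htop).eventually (gt_mem_nhds hc)).mono
      fun _ hx => hx.le
  obtain ⟨b, hb⟩ := hg.exists_forall_ge' c hfar
  exact ⟨b, hb, hc.trans_le (hb c)⟩

end AttainedExtrema

/-- Let `f : ℝ → ℝ` be `C¹`, not identically zero, with `f(x) → 0` and `f'(x) → 0` as
`x → +∞` and as `x → −∞`.  Then `f'` attains a global minimum and a global maximum
on `ℝ`: there exist `a, b ∈ ℝ` with `f'(a) ≤ f'(x) ≤ f'(b)` for all `x`, and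
moreover `f'(a) < 0 < f'(b)`; in particular `f'(a)·f'(b) < 0`. -/
theorem stmt_10 (f : ℝ → ℝ) (hf : ContDiff ℝ 1 f) (hne : ¬ ∀ x : ℝ, f x = 0)
    (htop : Filter.Tendsto f Filter.atTop (nhds 0))
    (hbot : Filter.Tendsto f Filter.atBot (nhds 0))
    (htop' : Filter.Tendsto (deriv f) Filter.atTop (nhds 0))
    (hbot' : Filter.Tendsto (deriv f) Filter.atBot (nhds 0)) :
    ∃ a b : ℝ, (∀ x : ℝ, deriv f a ≤ deriv f x ∧ deriv f x ≤ deriv f b)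
      ∧ deriv f a < 0 ∧ 0 < deriv f b ∧ deriv f a * deriv f b < 0 := by
  push Not at hne
  have hdiff : Differentiable ℝ f := hf.differentiable one_ne_zero
  have hcont : Continuous (deriv f) := hf.continuous_deriv le_rfl
  obtain ⟨c, hc⟩ := exists_deriv_neg_of_tendsto_atBot_atTop hdiff hbot htop hne
  obtain ⟨d, hd⟩ := exists_deriv_pos_of_tendsto_atBot_atTop hdiff hbot htop hne
  obtain ⟨a, ha, ha_neg⟩ := hcont.exists_forall_le_lt_of_tendsto_atBot_atTop hbot' htop' hc
  obtain ⟨b, hb, hb_pos⟩ := hcont.exists_forall_ge_gt_of_tendsto_atBot_atTop hbot' htop' hd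
  exact ⟨a, b, fun x => ⟨ha x, hb x⟩, ha_neg, hb_pos, mul_neg_of_neg_of_pos ha_neg hb_pos⟩
end

section
/- Let λ ∈ ℝ, λ ≠ 0, let T > 0 and S = ℝ × (0,T), and let u : S → ℝ be C³ in x and C¹ in t with continuous mixed derivatives, satisfying the Camassa–Holm equation u_t − u_{txx} + 3uu_x = 2u_xu_{xx} + uu_{xxx} on S; set m = u − u_{xx}. Suppose Ω ⊆ S is a nonempty open connected set such that (λ/2 + 1/(2λ) − m(p))·u_x(p) = 0 for every p ∈ Ω. Then u_x(p) = 0 for every p ∈ Ω, and there exists a constant c ∈ ℝ with u = c on Ω. If moreover u(x,t) → 0 as |x| → ∞ for each t ∈ (0,T) and u is not identically zero on S, then Ω is a proper subset of S. -/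
open Filter Metric Set Topology

/-!
Where `u_x ≠ 0`, the vanishing of `ω₁ ∧ ω₂` forces `m` to equal the nonzero constant
`λ/2 + 1/(2λ) = (λ² + 1)/(2λ)` on a neighbourhood, so `m_x = m_t = 0` there, and the
Camassa–Holm equation in the form `m_t + u m_x + 2 u_x m = 0` gives `u_x m = 0`, a contradiction.
Hence `u_x = 0` on `Ω`; then `u_xx = u_xxx = u_txx = 0` and the equation gives `u_t = 0`, so `u`
is locally constant, hence constant on the connected set `Ω`. If `Ω = S`, then `u` is constant on
a whole line `t = t₀`, and its decay at infinity makes that constant `0`.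
-/

section Slices

variable {𝕜 β F : Type*} [NontriviallyNormedField 𝕜] [TopologicalSpace β]
  [NormedAddCommGroup F] [NormedSpace 𝕜 F]

theorem Filter.EventuallyEq.deriv_fst_slice_eq {f g : 𝕜 × β → F} {p : 𝕜 × β}
    (h : f =ᶠ[𝓝 p] g) :
    deriv (fun x => f (x, p.2)) p.1 = deriv (fun x => g (x, p.2)) p.1 :=
  (h.comp_tendsto ((continuous_id.prodMk continuous_const).tendsto p.1)).deriv_eq

theorem Filter.EventuallyEq.deriv_snd_slice_eq {f g : β × 𝕜 → F} {p : β × 𝕜}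
    (h : f =ᶠ[𝓝 p] g) :
    deriv (fun t => f (p.1, t)) p.2 = deriv (fun t => g (p.1, t)) p.2 :=
  (h.comp_tendsto ((continuous_const.prodMk continuous_id).tendsto p.2)).deriv_eq

theorem IsOpen.deriv_fst_slice_eq_zero {U : Set (𝕜 × β)} {f : 𝕜 × β → F} (hU : IsOpen U)
    (hf : EqOn f 0 U) {p : 𝕜 × β} (hp : p ∈ U) : deriv (fun x => f (x, p.2)) p.1 = 0 := by
  simpa using (eventuallyEq_of_mem (hU.mem_nhds hp) hf).deriv_fst_slice_eq

theorem IsOpen.deriv_snd_slice_eq_zero {U : Set (β × 𝕜)} {f : β × 𝕜 → F} (hU : IsOpen U)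
    (hf : EqOn f 0 U) {p : β × 𝕜} (hp : p ∈ U) : deriv (fun t => f (p.1, t)) p.2 = 0 := by
  simpa using (eventuallyEq_of_mem (hU.mem_nhds hp) hf).deriv_snd_slice_eq

end Slices

theorem IsPreconnected.apply_eq_of_eventually_eq {X Y : Type*} [TopologicalSpace X] {s : Set X}
    (hs : IsPreconnected s) {f : X → Y} (hf : ∀ x ∈ s, ∀ᶠ y in 𝓝 x, f y = f x) {x y : X}
    (hx : x ∈ s) (hy : y ∈ s) : f x = f y := by
  have : PreconnectedSpace s := Subtype.preconnectedSpace hs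
  have hloc : IsLocallyConstant fun z : s => f z :=
    (IsLocallyConstant.iff_eventually_eq _).2 fun z =>
      (continuous_subtype_val.tendsto z).eventually (hf z z.2)
  exact hloc.apply_eq_of_preconnectedSpace ⟨x, hx⟩ ⟨y, hy⟩

theorem IsOpen.eventually_eq_of_hasDerivAt_slices_zero {E : Type*} [NormedAddCommGroup E]
    [NormedSpace ℝ E] {U : Set (ℝ × ℝ)} {f : ℝ × ℝ → E} (hU : IsOpen U)
    (hx : ∀ q ∈ U, HasDerivAt (fun x => f (x, q.2)) 0 q.1)
    (ht : ∀ q ∈ U, HasDerivAt (fun t => f (q.1, t)) 0 q.2) {p : ℝ × ℝ} (hp : p ∈ U) :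
    ∀ᶠ q in 𝓝 p, f q = f p := by
  obtain ⟨ε, hε, hball⟩ := isOpen_iff.1 hU p hp
  filter_upwards [ball_mem_nhds p hε] with q hq
  rw [← ball_prod_same] at hball hq
  have hline {a : ℝ} {g : ℝ → E} (hg : ∀ y ∈ ball a ε, HasDerivAt g 0 y) {y : ℝ}
      (hy : y ∈ ball a ε) : g y = g a :=
    isOpen_ball.is_const_of_deriv_eq_zero (convex_ball a ε).isPreconnected
      (fun z hz => (hg z hz).differentiableAt.differentiableWithinAt)
      (fun z hz => (hg z hz).deriv) hy (mem_ball_self hε)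
  calc f q = f (p.1, q.2) :=
        hline (g := fun x => f (x, q.2)) (fun y hy => hx (y, q.2) (hball ⟨hy, hq.2⟩)) hq.1
    _ = f p :=
        hline (g := fun t => f (p.1, t))
          (fun y hy => ht (p.1, y) (hball ⟨mem_ball_self hε, hy⟩)) hq.2

section CamassaHolm

variable {u ux uxx uxxx ut utxx : ℝ × ℝ → ℝ} {U : Set (ℝ × ℝ)}

theorem camassaHolm_ux_eq_zero {c : ℝ} (hc : c ≠ 0) (hU : IsOpen U)
    (hux : ∀ p : ℝ × ℝ, ux p = deriv (fun x => u (x, p.2)) p.1)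
    (huxxx : ∀ p : ℝ × ℝ, uxxx p = deriv (fun x => uxx (x, p.2)) p.1)
    (hut : ∀ p : ℝ × ℝ, ut p = deriv (fun t => u (p.1, t)) p.2)
    (hutxx : ∀ p : ℝ × ℝ, utxx p = deriv (fun t => uxx (p.1, t)) p.2)
    (hCH : ∀ p ∈ U, ut p - utxx p + 3 * u p * ux p = 2 * ux p * uxx p + u p * uxxx p)
    (hcont : ContinuousOn ux U) (hvanish : ∀ p ∈ U, (c - (u p - uxx p)) * ux p = 0) :
    ∀ p ∈ U, ux p = 0 := by
  intro p hp
  by_contra hne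
  have hm : uxx =ᶠ[𝓝 p] fun q => u q - c := by
    filter_upwards [(hcont.continuousAt (hU.mem_nhds hp)).eventually_ne hne,
      hU.mem_nhds hp] with q hq hqU
    linarith [(mul_eq_zero.1 (hvanish q hqU)).resolve_right hq]
  have huxxx_eq : uxxx p = ux p := by
    rw [huxxx, hm.deriv_fst_slice_eq, deriv_sub_const, hux]
  have hutxx_eq : utxx p = ut p := by
    rw [hutxx, hm.deriv_snd_slice_eq, deriv_sub_const, hut]
  have huxx_eq : uxx p = u p - c := hm.eq_of_nhds
  have : 2 * c * ux p = 0 := by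
    linear_combination hCH p hp + hutxx_eq + u p * huxxx_eq + 2 * ux p * huxx_eq
  exact hne (by simpa [hc] using this)

theorem camassaHolm_ut_eq_zero (hU : IsOpen U)
    (huxx : ∀ p : ℝ × ℝ, uxx p = deriv (fun x => ux (x, p.2)) p.1)
    (huxxx : ∀ p : ℝ × ℝ, uxxx p = deriv (fun x => uxx (x, p.2)) p.1)
    (hutxx : ∀ p : ℝ × ℝ, utxx p = deriv (fun t => uxx (p.1, t)) p.2)
    (hCH : ∀ p ∈ U, ut p - utxx p + 3 * u p * ux p = 2 * ux p * uxx p + u p * uxxx p)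
    (hux : ∀ p ∈ U, ux p = 0) : ∀ p ∈ U, ut p = 0 := by
  have huxx0 : ∀ p ∈ U, uxx p = 0 := fun p hp =>
    (huxx p).trans (hU.deriv_fst_slice_eq_zero hux hp)
  intro p hp
  have huxxx0 : uxxx p = 0 := (huxxx p).trans (hU.deriv_fst_slice_eq_zero huxx0 hp)
  have hutxx0 : utxx p = 0 := (hutxx p).trans (hU.deriv_snd_slice_eq_zero huxx0 hp)
  simpa [hux p hp, huxx0 p hp, huxxx0, hutxx0] using hCH p hp

end CamassaHolm

theorem stmt_12_general (lam : ℝ) (hlam : lam ≠ 0) (T : ℝ)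
    (S : Set (ℝ × ℝ)) (hS : S = {p : ℝ × ℝ | p.2 ∈ Set.Ioo 0 T})
    (u ux uxx uxxx ut utxx mm : ℝ × ℝ → ℝ)
    (hux : ∀ p : ℝ × ℝ, ux p = deriv (fun x => u (x, p.2)) p.1)
    (huxx : ∀ p : ℝ × ℝ, uxx p = deriv (fun x => ux (x, p.2)) p.1)
    (huxxx : ∀ p : ℝ × ℝ, uxxx p = deriv (fun x => uxx (x, p.2)) p.1)
    (hut : ∀ p : ℝ × ℝ, ut p = deriv (fun t => u (p.1, t)) p.2)
    (hutxx : ∀ p : ℝ × ℝ, utxx p = deriv (fun t => uxx (p.1, t)) p.2)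
    (hmm : ∀ p : ℝ × ℝ, mm p = u p - uxx p)
    -- regularity on S: C³ in x, C¹ in t, continuous (mixed) derivatives
    (hregx : ∀ t ∈ Set.Ioo (0 : ℝ) T, ContDiff ℝ 3 (fun x => u (x, t)))
    (hregt : ∀ x : ℝ, ContDiffOn ℝ 1 (fun t => u (x, t)) (Set.Ioo 0 T))
    (hcont : ContinuousOn ux S ∧ ContinuousOn ut S
      ∧ ContinuousOn uxx S ∧ ContinuousOn utxx S)
    -- Camassa–Holm equation on S
    (hCH : ∀ p ∈ S,
        ut p - utxx p + 3 * u p * ux p = 2 * ux p * uxx p + u p * uxxx p)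
    (Ω : Set (ℝ × ℝ)) (hΩS : Ω ⊆ S) (hΩopen : IsOpen Ω)
    (hΩconn : IsConnected Ω)
    -- ω₁∧ω₂ vanishes identically on Ω
    (hvanish : ∀ p ∈ Ω, (lam / 2 + 1 / (2 * lam) - mm p) * ux p = 0) :
    (∀ p ∈ Ω, ux p = 0)
    ∧ (∃ c : ℝ, ∀ p ∈ Ω, u p = c)
    ∧ (((∀ t ∈ Set.Ioo (0 : ℝ) T,
            Filter.Tendsto (fun x => u (x, t)) Filter.atTop (nhds 0)
            ∧ Filter.Tendsto (fun x => u (x, t)) Filter.atBot (nhds 0))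
        ∧ ¬ (∀ p ∈ S, u p = 0))
      → Ω ⊂ S) := by
  subst hS
  have hc : lam / 2 + 1 / (2 * lam) ≠ 0 := by
    rw [show lam / 2 + 1 / (2 * lam) = (lam ^ 2 + 1) / (2 * lam) by field_simp]
    exact div_ne_zero (by positivity) (by positivity)
  have hux0 : ∀ p ∈ Ω, ux p = 0 :=
    camassaHolm_ux_eq_zero hc hΩopen hux huxxx hut hutxx (fun p hp => hCH p (hΩS hp))
      (hcont.1.mono hΩS) (fun p hp => by simpa only [hmm] using hvanish p hp)
  have hut0 := camassaHolm_ut_eq_zero hΩopen huxx huxxx hutxx (fun p hp => hCH p (hΩS hp)) hux0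
  have hloc : ∀ p ∈ Ω, ∀ᶠ q in 𝓝 p, u q = u p := fun p hp =>
    hΩopen.eventually_eq_of_hasDerivAt_slices_zero
      (fun q hq => by
        simpa [← hux q, hux0 q hq] using
          ((hregx q.2 (hΩS hq)).differentiable (by norm_num) q.1).hasDerivAt)
      (fun q hq => by
        simpa [← hut q, hut0 q hq] using
          (((hregt q.1).differentiableOn one_ne_zero) q.2 (hΩS hq)).differentiableAt
            (isOpen_Ioo.mem_nhds (hΩS hq)) |>.hasDerivAt)
      hp
  obtain ⟨p₀, hp₀⟩ := hΩconn.nonempty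
  have hconst : ∀ p ∈ Ω, u p = u p₀ := fun p hp =>
    hΩconn.isPreconnected.apply_eq_of_eventually_eq hloc hp hp₀
  refine ⟨hux0, ⟨u p₀, hconst⟩, fun ⟨hdecay, hnz⟩ => ssubset_iff_subset_ne.2 ⟨hΩS, ?_⟩⟩
  rintro rfl
  have hu₀ : u p₀ = 0 := tendsto_nhds_unique
    (tendsto_const_nhds.congr fun x => (hconst (x, p₀.2) hp₀).symm) (hdecay p₀.2 hp₀).1
  exact hnz fun p hp => (hconst p hp).trans hu₀

/-- Theorem 3.2(a).
Let `λ ∈ ℝ`, `λ ≠ 0`, `T > 0`, `S = ℝ × (0,T)`, and let `u` be `C³` in `x` and `C¹`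
in `t` on `S` with continuous mixed derivatives, satisfying the Camassa–Holm
equation `u_t − u_{txx} + 3uu_x = 2u_xu_{xx} + uu_{xxx}` on `S`; set `m = u − u_xx`.
Suppose `Ω ⊆ S` is a nonempty open connected set on which
`(λ/2 + 1/(2λ) − m)·u_x = 0` everywhere (i.e. `ω_1∧ω_2` vanishes on `Ω`).
Then `u_x = 0` on `Ω`, and `u` is constant on `Ω`.  If moreover `u(x,t) → 0` as
`|x| → ∞` for each `t ∈ (0,T)` and `u` is not identically zero on `S`, then `Ω`
is a proper subset of `S`. -/
theorem stmt_12 (lam : ℝ) (hlam : lam ≠ 0) (T : ℝ) (hT : 0 < T)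
    (S : Set (ℝ × ℝ)) (hS : S = {p : ℝ × ℝ | p.2 ∈ Set.Ioo 0 T})
    (u ux uxx uxxx ut utxx mm : ℝ × ℝ → ℝ)
    (hux : ∀ p : ℝ × ℝ, ux p = deriv (fun x => u (x, p.2)) p.1)
    (huxx : ∀ p : ℝ × ℝ, uxx p = deriv (fun x => ux (x, p.2)) p.1)
    (huxxx : ∀ p : ℝ × ℝ, uxxx p = deriv (fun x => uxx (x, p.2)) p.1)
    (hut : ∀ p : ℝ × ℝ, ut p = deriv (fun t => u (p.1, t)) p.2)
    (hutxx : ∀ p : ℝ × ℝ, utxx p = deriv (fun t => uxx (p.1, t)) p.2)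
    (hmm : ∀ p : ℝ × ℝ, mm p = u p - uxx p)
    -- regularity on S: C³ in x, C¹ in t, continuous (mixed) derivatives
    (hregx : ∀ t ∈ Set.Ioo (0 : ℝ) T, ContDiff ℝ 3 (fun x => u (x, t)))
    (hregt : ∀ x : ℝ, ContDiffOn ℝ 1 (fun t => u (x, t)) (Set.Ioo 0 T))
    (hregtxx : ∀ x : ℝ, ContDiffOn ℝ 1 (fun t => uxx (x, t)) (Set.Ioo 0 T))
    (hcont : ContinuousOn ux S ∧ ContinuousOn ut S
      ∧ ContinuousOn uxx S ∧ ContinuousOn utxx S)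
    -- Camassa–Holm equation on S
    (hCH : ∀ p ∈ S,
        ut p - utxx p + 3 * u p * ux p = 2 * ux p * uxx p + u p * uxxx p)
    (Ω : Set (ℝ × ℝ)) (hΩS : Ω ⊆ S) (hΩopen : IsOpen Ω) (hΩne : Ω.Nonempty)
    (hΩconn : IsConnected Ω)
    -- ω₁∧ω₂ vanishes identically on Ω
    (hvanish : ∀ p ∈ Ω, (lam / 2 + 1 / (2 * lam) - mm p) * ux p = 0) :
    (∀ p ∈ Ω, ux p = 0)
    ∧ (∃ c : ℝ, ∀ p ∈ Ω, u p = c)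
    ∧ (((∀ t ∈ Set.Ioo (0 : ℝ) T,
            Filter.Tendsto (fun x => u (x, t)) Filter.atTop (nhds 0)
            ∧ Filter.Tendsto (fun x => u (x, t)) Filter.atBot (nhds 0))
        ∧ ¬ (∀ p ∈ S, u p = 0))
      → Ω ⊂ S) :=
  stmt_12_general lam hlam T S hS u ux uxx uxxx ut utxx mm hux huxx huxxx hut hutxx hmm hregx hregt
    hcont hCH Ω hΩS hΩopen hΩconn hvanish
end

section
/- Let λ ∈ ℝ, λ ≠ 0, let T > 0 and S = ℝ × (0,T), and let u : S → ℝ be C³ in x and C¹ in t with continuous mixed derivatives, satisfying the Camassa–Holm equation u_t − u_{txx} + 3uu_x = 2u_xu_{xx} + uu_{xxx} on S; set m = u − u_{xx}. Suppose there exists t₀ ∈ (0,T) such that x ↦ u(x,t₀) is not identically zero, u(x,t₀) → 0 and u_x(x,t₀) → 0 as x → +∞ and as x → −∞, and u_x(·,t₀) is continuous. Then there exist two disjoint open balls B₁, B₂ ⊆ S such that (λ/2 + 1/(2λ) − m(p))·u_x(p) ≠ 0 for every p ∈ B₁ ∪ B₂. -/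
/-!
Fix the time `t₀` and write `g = u(·, t₀)`, `c = λ/2 + 1/(2λ)`, so that `m = g - g''`.
If `(c - m) g'` vanished identically, then `(g - c)² - g'²` would have zero derivative,
hence equal its limit `c²` at `+∞`, i.e. `g'² = g (g - 2c)`. At a positive maximum of `g`
this forces `g = 2c > 0`, and then `g` takes the value `c` on its way down to `0`, where
`g'² = -c² < 0`; likewise for a negative minimum. So `g ≡ 0`, a contradiction. Hence
`(c - m) u_x ≠ 0` at some point of `S`, and by continuity on a neighbourhood of it, which
contains two disjoint balls.
-/

open Filter Metric Set Topology

theorem exists_disjoint_balls_subset {E : Type*} [NormedAddCommGroup E] [NormedSpace ℝ E]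
    [Nontrivial E] {U : Set E} {p : E} (hU : U ∈ 𝓝 p) :
    ∃ p₁ p₂ : E, ∃ r : ℝ, 0 < r ∧ ball p₁ r ⊆ U ∧ ball p₂ r ⊆ U
      ∧ Disjoint (ball p₁ r) (ball p₂ r) := by
  obtain ⟨ε, hε, hball⟩ := Metric.mem_nhds_iff.mp hU
  obtain ⟨v, hv⟩ := exists_norm_eq E (half_pos hε).le
  refine ⟨p + v, p - v, ε / 2, half_pos hε, ?_, ?_, ball_disjoint_ball ?_⟩
  · exact (ball_subset_ball' (by simp [hv])).trans hball
  · exact (ball_subset_ball' (by simp [hv])).trans hball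
  · rw [dist_eq_norm, add_sub_sub_cancel, ← two_smul ℝ v, norm_smul, hv, Real.norm_two]
    linarith

theorem nonpos_of_sq_eq_mul_sub {g g' : ℝ → ℝ} {c : ℝ} (hg : ∀ x, HasDerivAt g (g' x) x)
    (htop : Tendsto g atTop (𝓝 0)) (hbot : Tendsto g atBot (𝓝 0))
    (heq : ∀ x, g' x ^ 2 = g x * (g x - 2 * c)) (x : ℝ) : g x ≤ 0 := by
  by_contra! hx
  have hcont : Continuous g := continuous_iff_continuousAt.2 fun y => (hg y).continuousAt
  have hev : ∀ᶠ y in cocompact ℝ, g y ≤ g x := by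
    rw [cocompact_eq_atBot_atTop, eventually_sup]
    exact ⟨(hbot.eventually_lt_const hx).mono fun _ => le_of_lt,
      (htop.eventually_lt_const hx).mono fun _ => le_of_lt⟩
  obtain ⟨x₀, hmax⟩ := hcont.exists_forall_ge' x hev
  have hpos : 0 < g x₀ := hx.trans_le (hmax x)
  have hg'0 : g' x₀ = 0 := (hg x₀).deriv ▸ (IsLocalMax.deriv_eq_zero (.of_forall hmax))
  have hmax_eq : g x₀ = 2 * c := by
    have h := heq x₀
    rw [hg'0] at h
    rcases mul_eq_zero.mp (h.symm.trans (zero_pow two_ne_zero)) with h | h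
    · exact absurd h hpos.ne'
    · linarith
  have hc : 0 < c := by linarith
  obtain ⟨y, hy⟩ := (htop.eventually_lt_const hc).exists
  obtain ⟨z, -, hz⟩ := intermediate_value_uIcc hcont.continuousOn
    (show c ∈ uIcc (g x₀) (g y) from mem_uIcc.2 (.inr ⟨hy.le, by linarith⟩))
  nlinarith [heq z, sq_nonneg (g' z)]

theorem eq_zero_of_sq_eq_mul_sub {g g' : ℝ → ℝ} {c : ℝ} (hg : ∀ x, HasDerivAt g (g' x) x)
    (htop : Tendsto g atTop (𝓝 0)) (hbot : Tendsto g atBot (𝓝 0))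
    (heq : ∀ x, g' x ^ 2 = g x * (g x - 2 * c)) (x : ℝ) : g x = 0 := by
  have hneg : -g x ≤ 0 :=
    nonpos_of_sq_eq_mul_sub (g := fun y => -g y) (g' := fun y => -g' y) (c := -c)
      (fun y => (hg y).neg) (by simpa using htop.neg) (by simpa using hbot.neg)
      (fun y => by linear_combination heq y) x
  linarith [nonpos_of_sq_eq_mul_sub hg htop hbot heq x]

theorem sq_deriv_eq_of_mul_deriv_eq_zero {g : ℝ → ℝ} {c : ℝ} (hg : ContDiff ℝ 2 g)
    (h : ∀ x, (c - (g x - deriv (deriv g) x)) * deriv g x = 0)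
    (htop : Tendsto g atTop (𝓝 0)) (htop' : Tendsto (deriv g) atTop (𝓝 0)) (x : ℝ) :
    deriv g x ^ 2 = g x * (g x - 2 * c) := by
  have hg₁ : Differentiable ℝ g := hg.differentiable two_ne_zero
  have hg₂ : Differentiable ℝ (deriv g) :=
    ((contDiff_succ_iff_deriv (n := 1)).mp hg).2.2.differentiable one_ne_zero
  set E : ℝ → ℝ := fun x => (g x - c) ^ 2 - deriv g x ^ 2
  -- `E' = -2 (c - m) g'`, with `m = g - g''`
  have hE' : ∀ y, HasDerivAt E 0 y := fun y =>
    ((((hg₁ y).hasDerivAt.sub_const c).pow 2).sub ((hg₂ y).hasDerivAt.pow 2)).congr_deriv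
      (by linear_combination (-2 : ℝ) * h y)
  have hE_const : ∀ y, E y = E x :=
    fun y => is_const_of_deriv_eq_zero (fun z => (hE' z).differentiableAt)
      (fun z => (hE' z).deriv) y x
  have hE_lim : Tendsto E atTop (𝓝 ((0 - c) ^ 2 - 0 ^ 2)) :=
    ((htop.sub_const c).pow 2).sub (htop'.pow 2)
  have hEx : E x = c ^ 2 :=
    tendsto_nhds_unique (tendsto_const_nhds.congr fun y => (hE_const y).symm)
      (by simpa using hE_lim)
  simp only [E] at hEx
  linear_combination -hEx

theorem exists_mul_deriv_ne_zero {g : ℝ → ℝ} (c : ℝ) (hg : ContDiff ℝ 2 g)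
    (htop : Tendsto g atTop (𝓝 0)) (hbot : Tendsto g atBot (𝓝 0))
    (htop' : Tendsto (deriv g) atTop (𝓝 0)) (hne : ¬ ∀ x, g x = 0) :
    ∃ x, (c - (g x - deriv (deriv g) x)) * deriv g x ≠ 0 := by
  by_contra! h
  exact hne <| eq_zero_of_sq_eq_mul_sub (fun x => (hg.differentiable two_ne_zero x).hasDerivAt)
    htop hbot (sq_deriv_eq_of_mul_deriv_eq_zero hg h htop htop')

theorem stmt_14_general (lam : ℝ) (T : ℝ)
    (S : Set (ℝ × ℝ)) (hS : S = {p : ℝ × ℝ | p.2 ∈ Set.Ioo 0 T})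
    (u ux uxx ut utxx mm : ℝ × ℝ → ℝ)
    (hux : ∀ p : ℝ × ℝ, ux p = deriv (fun x => u (x, p.2)) p.1)
    (huxx : ∀ p : ℝ × ℝ, uxx p = deriv (fun x => ux (x, p.2)) p.1)
    (hmm : ∀ p : ℝ × ℝ, mm p = u p - uxx p)
    -- regularity on S: C³ in x, C¹ in t, continuous (mixed) derivatives
    (hregx : ∀ t ∈ Set.Ioo (0 : ℝ) T, ContDiff ℝ 3 (fun x => u (x, t)))
    (hcont : ContinuousOn u S ∧ ContinuousOn ux S ∧ ContinuousOn uxx S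
      ∧ ContinuousOn ut S ∧ ContinuousOn utxx S)
    -- the distinguished time t₀
    (t₀ : ℝ) (ht₀ : t₀ ∈ Set.Ioo (0 : ℝ) T)
    (hnz : ¬ ∀ x : ℝ, u (x, t₀) = 0)
    (hudecay : Filter.Tendsto (fun x => u (x, t₀)) Filter.atTop (nhds 0)
      ∧ Filter.Tendsto (fun x => u (x, t₀)) Filter.atBot (nhds 0))
    (huxdecay : Filter.Tendsto (fun x => ux (x, t₀)) Filter.atTop (nhds 0)
      ∧ Filter.Tendsto (fun x => ux (x, t₀)) Filter.atBot (nhds 0)) :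
    ∃ (p₁ p₂ : ℝ × ℝ) (r₁ r₂ : ℝ), 0 < r₁ ∧ 0 < r₂
      ∧ Metric.ball p₁ r₁ ⊆ S ∧ Metric.ball p₂ r₂ ⊆ S
      ∧ Disjoint (Metric.ball p₁ r₁) (Metric.ball p₂ r₂)
      ∧ ∀ p ∈ Metric.ball p₁ r₁ ∪ Metric.ball p₂ r₂,
          (lam / 2 + 1 / (2 * lam) - mm p) * ux p ≠ 0 := by
  set c := lam / 2 + 1 / (2 * lam)
  set g : ℝ → ℝ := fun x => u (x, t₀)
  have hux_g : (fun x => ux (x, t₀)) = deriv g := funext fun x => hux (x, t₀)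
  have hmm_g : ∀ x, mm (x, t₀) = g x - deriv (deriv g) x := fun x => by
    rw [hmm, huxx, ← hux_g]
  obtain ⟨x₀, hx₀⟩ := exists_mul_deriv_ne_zero c ((hregx t₀ ht₀).of_le (by norm_num))
    hudecay.1 hudecay.2 (hux_g ▸ huxdecay.1) hnz
  have hS_open : IsOpen S := hS ▸ isOpen_Ioo.preimage continuous_snd
  have hf : ContinuousOn (fun p => (c - mm p) * ux p) S := by
    rw [show mm = fun p => u p - uxx p from funext hmm]
    exact (continuousOn_const.sub (hcont.1.sub hcont.2.2.1)).mul hcont.2.1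
  have hp₀ : (x₀, t₀) ∈ S := hS ▸ ht₀
  have hU : S ∩ {p | (c - mm p) * ux p ≠ 0} ∈ 𝓝 (x₀, t₀) :=
    inter_mem (hS_open.mem_nhds hp₀) <| (hf.continuousAt (hS_open.mem_nhds hp₀)).eventually_ne
      (by rwa [hmm_g, hux])
  obtain ⟨p₁, p₂, r, hr, h₁, h₂, hdisj⟩ := exists_disjoint_balls_subset hU
  refine ⟨p₁, p₂, r, r, hr, hr, fun p hp => (h₁ hp).1, fun p hp => (h₂ hp).1, hdisj, ?_⟩
  rintro p (hp | hp)
  exacts [(h₁ hp).2, (h₂ hp).2]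

/-- Theorem 3.1(b).
Let `λ ∈ ℝ`, `λ ≠ 0`, `T > 0`, `S = ℝ × (0,T)`, and let `u` be `C³` in `x` and `C¹`
in `t` on `S` with continuous mixed derivatives, satisfying the Camassa–Holm
equation `u_t − u_{txx} + 3uu_x = 2u_xu_{xx} + uu_{xxx}` on `S`; set `m = u − u_xx`.
Suppose there is `t₀ ∈ (0,T)` such that `x ↦ u(x,t₀)` is not identically zero,
`u(x,t₀) → 0` and `u_x(x,t₀) → 0` as `x → ±∞`, and `u_x(·,t₀)` is continuous.
Then there are two disjoint open balls `B₁, B₂ ⊆ S` on which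
`(λ/2 + 1/(2λ) − m)·u_x ≠ 0` everywhere (i.e. `ω_1∧ω_2` is nonvanishing there). -/
theorem stmt_14 (lam : ℝ) (hlam : lam ≠ 0) (T : ℝ) (hT : 0 < T)
    (S : Set (ℝ × ℝ)) (hS : S = {p : ℝ × ℝ | p.2 ∈ Set.Ioo 0 T})
    (u ux uxx uxxx ut utxx mm : ℝ × ℝ → ℝ)
    (hux : ∀ p : ℝ × ℝ, ux p = deriv (fun x => u (x, p.2)) p.1)
    (huxx : ∀ p : ℝ × ℝ, uxx p = deriv (fun x => ux (x, p.2)) p.1)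
    (huxxx : ∀ p : ℝ × ℝ, uxxx p = deriv (fun x => uxx (x, p.2)) p.1)
    (hut : ∀ p : ℝ × ℝ, ut p = deriv (fun t => u (p.1, t)) p.2)
    (hutxx : ∀ p : ℝ × ℝ, utxx p = deriv (fun t => uxx (p.1, t)) p.2)
    (hmm : ∀ p : ℝ × ℝ, mm p = u p - uxx p)
    -- regularity on S: C³ in x, C¹ in t, continuous (mixed) derivatives
    (hregx : ∀ t ∈ Set.Ioo (0 : ℝ) T, ContDiff ℝ 3 (fun x => u (x, t)))
    (hregt : ∀ x : ℝ, ContDiffOn ℝ 1 (fun t => u (x, t)) (Set.Ioo 0 T))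
    (hregtxx : ∀ x : ℝ, ContDiffOn ℝ 1 (fun t => uxx (x, t)) (Set.Ioo 0 T))
    (hcont : ContinuousOn u S ∧ ContinuousOn ux S ∧ ContinuousOn uxx S
      ∧ ContinuousOn ut S ∧ ContinuousOn utxx S)
    -- Camassa–Holm equation on S
    (hCH : ∀ p ∈ S,
        ut p - utxx p + 3 * u p * ux p = 2 * ux p * uxx p + u p * uxxx p)
    -- the distinguished time t₀
    (t₀ : ℝ) (ht₀ : t₀ ∈ Set.Ioo (0 : ℝ) T)
    (hnz : ¬ ∀ x : ℝ, u (x, t₀) = 0)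
    (hudecay : Filter.Tendsto (fun x => u (x, t₀)) Filter.atTop (nhds 0)
      ∧ Filter.Tendsto (fun x => u (x, t₀)) Filter.atBot (nhds 0))
    (huxdecay : Filter.Tendsto (fun x => ux (x, t₀)) Filter.atTop (nhds 0)
      ∧ Filter.Tendsto (fun x => ux (x, t₀)) Filter.atBot (nhds 0))
    (huxcont : Continuous (fun x => ux (x, t₀))) :
    ∃ (p₁ p₂ : ℝ × ℝ) (r₁ r₂ : ℝ), 0 < r₁ ∧ 0 < r₂
      ∧ Metric.ball p₁ r₁ ⊆ S ∧ Metric.ball p₂ r₂ ⊆ S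
      ∧ Disjoint (Metric.ball p₁ r₁) (Metric.ball p₂ r₂)
      ∧ ∀ p ∈ Metric.ball p₁ r₁ ∪ Metric.ball p₂ r₂,
          (lam / 2 + 1 / (2 * lam) - mm p) * ux p ≠ 0 :=
  stmt_14_general lam T S hS u ux uxx ut utxx mm hux huxx hmm hregx hcont t₀ ht₀ hnz hudecay
    huxdecay
end
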